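/- arXiv:0910.3142 — 3 statements merged into one kernel-verified Lean document; each statement's English description precedes it below -/
import Mathlib

section
/- There exists a unique formal power series exp_E(X) = Σ_{i≥0} e_i X^{q^i} over K with e_0 = 1 satisfying the functional equation φ(t)(exp_E(X)) = exp_E(t·X), where φ(t) = t + a_1 τ + ... + a_n τ^n is the t-action of a Drinfeld module and τ is the q-power Frobenius. -/
open scoped Classical in
/-- The formal power series `∑ e_i X^(q^i)` associated to a sequence of coefficients
`e : ℕ → K`. -/
noncomputable def qPowerSeries (K : Type*) [Field K] (q : ℕ) (e : ℕ → K) :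
    PowerSeries K :=
  PowerSeries.mk fun m => if h : ∃ i : ℕ, q ^ i = m then e (Nat.find h) else 0

/-!
Raising to a power of `q` is additive in characteristic `p`, so
`(∑ eₖ X^(qᵏ))^(qⁱ) = ∑ eₖ^(qⁱ) X^(q^(k+i))`. Hence both sides of the functional equation are
again of the form `∑ cₖ X^(qᵏ)`, and comparing the coefficients of `X^(qᵏ)` gives
`(t^(qᵏ) - t) eₖ = ∑_{1 ≤ i ≤ min(n, k)} aᵢ e_{k-i}^(qⁱ)`. As `t^(qᵏ) ≠ t` for `k ≥ 1`, this
determines `eₖ` from `e₀, …, e_{k-1}`.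
-/

open PowerSeries

theorem Nat.existsUnique_seq_of_causal {α : Type*} [Nonempty α] (F : ℕ → (ℕ → α) → α)
    (hF : ∀ k e e', (∀ j < k, e j = e' j) → F k e = F k e') :
    ∃! e : ℕ → α, ∀ k, e k = F k e := by
  let ind (k : ℕ) (ih : ∀ j < k, α) : α :=
    F k fun j => if h : j < k then ih j h else Classical.arbitrary α
  refine ⟨Nat.strongRec ind, fun k => ?_, fun e he => funext fun k => ?_⟩
  · show Nat.strongRec (motive := fun _ => α) ind k = _
    rw [Nat.strongRec_eq]
    exact hF k _ _ fun j hj => dif_pos hj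
  · induction k using Nat.strong_induction_on with
    | _ k ih =>
      rw [he, Nat.strongRec_eq]
      exact hF k _ _ fun j hj => by rw [dif_pos hj, ih j hj]

section qPowerSeries

variable {K : Type*} [Field K] {q : ℕ}

theorem coeff_qPowerSeries_pow (hq : 1 < q) (e : ℕ → K) (i : ℕ) :
    coeff (q ^ i) (qPowerSeries K q e) = e i := by
  have h : ∃ j, q ^ j = q ^ i := ⟨i, rfl⟩
  rw [qPowerSeries, coeff_mk, dif_pos h, Nat.pow_right_injective hq (Nat.find_spec h)]

theorem coeff_qPowerSeries_of_forall_pow_ne (e : ℕ → K) {N : ℕ} (h : ∀ i, q ^ i ≠ N) :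
    coeff N (qPowerSeries K q e) = 0 := by
  rw [qPowerSeries, coeff_mk, dif_neg (not_exists.mpr h)]

theorem qPowerSeries_injective (hq : 1 < q) : Function.Injective (qPowerSeries K q) :=
  fun e f h => funext fun i => by
    rw [← coeff_qPowerSeries_pow hq e, h, coeff_qPowerSeries_pow hq]

theorem qPowerSeries_add (e f : ℕ → K) :
    qPowerSeries K q (e + f) = qPowerSeries K q e + qPowerSeries K q f := by
  ext N
  simp only [qPowerSeries, coeff_mk, map_add, Pi.add_apply]
  split_ifs <;> simp

theorem C_mul_qPowerSeries (c : K) (e : ℕ → K) :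
    C c * qPowerSeries K q e = qPowerSeries K q (c • e) := by
  ext N
  simp only [qPowerSeries, coeff_C_mul, coeff_mk, Pi.smul_apply, smul_eq_mul]
  split_ifs <;> simp

theorem qPowerSeries_sum {ι : Type*} (s : Finset ι) (e : ι → ℕ → K) :
    ∑ i ∈ s, qPowerSeries K q (e i) = qPowerSeries K q (∑ i ∈ s, e i) :=
  (map_sum (AddMonoidHom.mk' (qPowerSeries K q) qPowerSeries_add) e s).symm

theorem map_qPowerSeries (g : K →+* K) (e : ℕ → K) :
    map g (qPowerSeries K q e) = qPowerSeries K q (g ∘ e) := by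
  ext N
  simp only [qPowerSeries, coeff_map, coeff_mk, Function.comp_apply]
  split_ifs <;> simp

theorem expand_qPowerSeries (hq : 1 < q) (i : ℕ) (e : ℕ → K) (h : q ^ i ≠ 0) :
    expand (q ^ i) h (qPowerSeries K q e) =
      qPowerSeries K q fun k => if i ≤ k then e (k - i) else 0 := by
  ext N
  rw [coeff_expand]
  by_cases hN : ∃ k, q ^ k = N
  · obtain ⟨k, rfl⟩ := hN
    rw [coeff_qPowerSeries_pow hq]
    by_cases hik : i ≤ k
    · rw [if_pos (pow_dvd_pow q hik), if_pos hik, Nat.pow_div hik (by omega),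
        coeff_qPowerSeries_pow hq]
    · rw [if_neg (mt (Nat.pow_dvd_pow_iff_le_right hq).mp hik), if_neg hik]
  · push Not at hN
    rw [coeff_qPowerSeries_of_forall_pow_ne _ hN]
    split_ifs with hd
    · refine coeff_qPowerSeries_of_forall_pow_ne _ fun k hk => hN (i + k) ?_
      rw [pow_add, hk, Nat.mul_div_cancel' hd]
    · rfl

theorem qPowerSeries_pow_pow {p m : ℕ} [ExpChar K p] (hq : q = p ^ m) (hq1 : 1 < q)
    (e : ℕ → K) (i : ℕ) :
    qPowerSeries K q e ^ q ^ i =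
      qPowerSeries K q fun k => if i ≤ k then e (k - i) ^ q ^ i else 0 := by
  have hqi : q ^ i = p ^ (m * i) := by rw [hq, pow_mul]
  have hp : p ≠ 0 := expChar_ne_zero K p
  calc qPowerSeries K q e ^ q ^ i = qPowerSeries K q e ^ p ^ (m * i) := by rw [hqi]
    _ = map (iterateFrobenius K p (m * i)) (expand (p ^ (m * i)) (pow_ne_zero _ hp)
          (qPowerSeries K q e)) :=
        (MvPowerSeries.map_iterateFrobenius_expand p hp _ _).symm
    _ = _ := by
      simp only [← hqi, expand_qPowerSeries hq1, map_qPowerSeries]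
      congr 1
      funext k
      simp only [Function.comp_apply, apply_ite (iterateFrobenius K p (m * i)), map_zero,
        iterateFrobenius_def, hqi]

end qPowerSeries

section DrinfeldExponential

variable {K : Type*} [Field K]

/-- The coefficient of `X ^ q ^ k` in `(a₁ τ + ⋯ + aₙ τⁿ) (∑ eᵢ X ^ q ^ i)`. -/
def tauPartCoeff (q n : ℕ) (a e : ℕ → K) (k : ℕ) : K :=
  ∑ i ∈ Finset.Icc 1 n, a i * if i ≤ k then e (k - i) ^ q ^ i else 0

theorem tauPartCoeff_zero (q n : ℕ) (a e : ℕ → K) : tauPartCoeff q n a e 0 = 0 :=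
  Finset.sum_eq_zero fun i hi => by
    rw [if_neg (by have := (Finset.mem_Icc.mp hi).1; omega), mul_zero]

theorem tauPartCoeff_congr (q n : ℕ) (a : ℕ → K) {e e' : ℕ → K} {k : ℕ}
    (h : ∀ j < k, e j = e' j) : tauPartCoeff q n a e k = tauPartCoeff q n a e' k :=
  Finset.sum_congr rfl fun i hi => by
    have := (Finset.mem_Icc.mp hi).1
    split_ifs with hik
    · rw [h (k - i) (by omega)]
    · rfl

theorem drinfeld_functionalEquation_iff {p m q : ℕ} [ExpChar K p] (hq : q = p ^ m) (hq1 : 1 < q)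
    (t : K) (n : ℕ) (a e : ℕ → K) :
    C t * qPowerSeries K q e + ∑ i ∈ Finset.Icc 1 n, C (a i) * qPowerSeries K q e ^ q ^ i
        = qPowerSeries K q (fun i => t ^ q ^ i * e i) ↔
      ∀ k, t * e k + tauPartCoeff q n a e k = t ^ q ^ k * e k := by
  simp only [qPowerSeries_pow_pow hq hq1, C_mul_qPowerSeries]
  rw [qPowerSeries_sum, ← qPowerSeries_add, (qPowerSeries_injective hq1).eq_iff, funext_iff]
  simp [tauPartCoeff, Finset.sum_apply]

theorem drinfeld_coeff_equations_iff_recursion {q : ℕ} {t : K} (ht : ∀ k, 0 < k → t ^ q ^ k ≠ t)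
    (n : ℕ) (a e : ℕ → K) :
    (e 0 = 1 ∧ ∀ k, t * e k + tauPartCoeff q n a e k = t ^ q ^ k * e k) ↔
      ∀ k, e k = if k = 0 then 1 else tauPartCoeff q n a e k / (t ^ q ^ k - t) := by
  have step (k : ℕ) : t * e (k + 1) + tauPartCoeff q n a e (k + 1) = t ^ q ^ (k + 1) * e (k + 1) ↔
      e (k + 1) = tauPartCoeff q n a e (k + 1) / (t ^ q ^ (k + 1) - t) := by
    rw [eq_div_iff (sub_ne_zero.mpr (ht (k + 1) (by omega)))]
    constructor <;> intro h <;> linear_combination -h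
  constructor
  · rintro ⟨h0, h⟩ (_ | k)
    · rwa [if_pos rfl]
    · rw [if_neg k.succ_ne_zero, ← step]
      exact h (k + 1)
  · intro h
    refine ⟨h 0, fun k => ?_⟩
    cases k with
    | zero => rw [tauPartCoeff_zero, add_zero, pow_zero, pow_one]
    | succ k => exact (step k).mpr ((h (k + 1)).trans (if_neg k.succ_ne_zero))

end DrinfeldExponential

theorem exists_unique_drinfeld_exponential_general
    (K : Type*) [Field K] (p : ℕ) [Fact p.Prime] [CharP K p]
    (q : ℕ) (hq : ∃ m : ℕ, 0 < m ∧ q = p ^ m)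
    (t : K) (ht : ∀ m : ℕ, 0 < m → t ^ (q ^ m) ≠ t)
    (n : ℕ) (a : ℕ → K) :
    ∃! e : ℕ → K, e 0 = 1 ∧
      (PowerSeries.C : K →+* PowerSeries K) t * qPowerSeries K q e
          + ∑ i ∈ Finset.Icc 1 n, (PowerSeries.C : K →+* PowerSeries K) (a i) * (qPowerSeries K q e) ^ (q ^ i)
        = qPowerSeries K q (fun i => t ^ (q ^ i) * e i) := by
  obtain ⟨m, hm, hqm⟩ := hq
  have hq1 : 1 < q := hqm ▸ Nat.one_lt_pow hm.ne' (Fact.out : p.Prime).one_lt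
  simp only [drinfeld_functionalEquation_iff hqm hq1, drinfeld_coeff_equations_iff_recursion ht]
  refine Nat.existsUnique_seq_of_causal _ fun k e e' h => ?_
  rw [tauPartCoeff_congr q n a h]

/-- Existence and uniqueness of the exponential of a Drinfeld module: there is a unique
power series `exp_E(X) = ∑_{i ≥ 0} e_i X^(q^i)` with `e_0 = 1` such that
`φ(t)(exp_E(X)) = exp_E(t X)`, where `φ(t) = t + a_1 τ + ⋯ + a_n τ^n` and `τ` is the
`q`-power Frobenius.  Here `K` is a field of characteristic `p` containing `k(t)`
(so that `t^(q^m) ≠ t` for `m ≥ 1`), and `q` is a positive power of `p`. -/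
theorem exists_unique_drinfeld_exponential
    (K : Type*) [Field K] (p : ℕ) [Fact p.Prime] [CharP K p]
    (q : ℕ) (hq : ∃ m : ℕ, 0 < m ∧ q = p ^ m)
    (t : K) (ht : ∀ m : ℕ, 0 < m → t ^ (q ^ m) ≠ t)
    (n : ℕ) (a : ℕ → K) (han : a n ≠ 0) :
    ∃! e : ℕ → K, e 0 = 1 ∧
      (PowerSeries.C : K →+* PowerSeries K) t * qPowerSeries K q e
          + ∑ i ∈ Finset.Icc 1 n, (PowerSeries.C : K →+* PowerSeries K) (a i) * (qPowerSeries K q e) ^ (q ^ i)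
        = qPowerSeries K q (fun i => t ^ (q ^ i) * e i) :=
  exists_unique_drinfeld_exponential_general K p q hq t ht n a
end

section
/- In the setting of the previous lemma with n = 1: for V = F = k((1/t)), L = k[[1/t]], Λ₂ = k[t], and Λ₁ = c·k[t] for some c ∈ F^×, one has χ₁ − χ₂ = v(c), where χ_i is the Euler characteristic of the map δ_i: Λ_i ⊕ L → V, (λ,ℓ) ↦ λ − ℓ. -/
/-!
In the variable `u = 1/t`, the lattice `k[t]` is the space of Laurent series supported in
degrees `≤ 0` and `L = k[[u]]` the space of those supported in degrees `≥ 0`. For two such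
coordinate subspaces, supported in degrees `≤ a` and `≥ b`, the kernel of `δ` is spanned by the
degrees in `[b, a]` and its cokernel by the degrees in `(a, b)`, so `χ = a - b + 1`.
Multiplication by `c` is an automorphism of `F` carrying `k[t]` onto `Λ₁` and pulling `L` back to
the series supported in degrees `≥ -v(c)`; hence `χ₁ = v(c) + 1` while `χ₂ = 1`.
-/

open Set Module

namespace Submodule

variable {R V W : Type*} [Ring R] [AddCommGroup V] [Module R V] [AddCommGroup W] [Module R W]

/-- The Euler characteristic of `δ : Λ × L → V, (λ, ℓ) ↦ λ - ℓ`, whose kernel is `Λ ⊓ L` and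
whose cokernel is `V ⧸ (Λ ⊔ L)`. -/
noncomputable def diffEulerChar (Λ L : Submodule R V) : ℤ :=
  (finrank R ↥(Λ ⊓ L) : ℤ) - finrank R (V ⧸ Λ ⊔ L)

theorem diffEulerChar_map (φ : V ≃ₗ[R] W) (Λ : Submodule R V) (L : Submodule R W) :
    diffEulerChar (Λ.map (φ : V →ₗ[R] W)) L =
      diffEulerChar Λ (L.comap (φ : V →ₗ[R] W)) := by
  have hinf : Λ.map (φ : V →ₗ[R] W) ⊓ L =
      (Λ ⊓ L.comap (φ : V →ₗ[R] W)).map (φ : V →ₗ[R] W) := by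
    rw [map_inf _ φ.injective, map_comap_eq_of_surjective φ.surjective]
  have hsup : (Λ ⊔ L.comap (φ : V →ₗ[R] W)).map (φ : V →ₗ[R] W) =
      Λ.map (φ : V →ₗ[R] W) ⊔ L := by
    rw [map_sup, map_comap_eq_of_surjective φ.surjective]
  rw [diffEulerChar, diffEulerChar, hinf, φ.finrank_map_eq,
    ← (Quotient.equiv _ _ φ hsup).finrank_eq]

end Submodule

namespace HahnSeries

variable {Γ R : Type*}

section Supported

variable [PartialOrder Γ] [Semiring R]

variable (R) in
def supportedIn (s : Set Γ) : Submodule R R⟦Γ⟧ where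
  carrier := {x | x.support ⊆ s}
  add_mem' ha hb := (support_add_subset _ _).trans (union_subset ha hb)
  zero_mem' := by simp
  smul_mem' _ _ hx := (support_smul_subset _ _).trans hx

theorem mem_supportedIn {s : Set Γ} {x : R⟦Γ⟧} : x ∈ supportedIn R s ↔ x.support ⊆ s :=
  Iff.rfl

theorem supportedIn_mono {s t : Set Γ} (h : s ⊆ t) : supportedIn R s ≤ supportedIn R t :=
  fun _ hx => hx.trans h

theorem supportedIn_inf (s t : Set Γ) :
    supportedIn R s ⊓ supportedIn R t = supportedIn R (s ∩ t) := by
  ext x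
  exact subset_inter_iff.symm

noncomputable def restrict (s : Set Γ) (x : R⟦Γ⟧) : R⟦Γ⟧ where
  coeff := s.indicator x.coeff
  isPWO_support' := x.isPWO_support.mono
    ((support_indicator (f := x.coeff)).trans_subset inter_subset_right)

@[simp]
theorem coeff_restrict (s : Set Γ) (x : R⟦Γ⟧) : (x.restrict s).coeff = s.indicator x.coeff :=
  rfl

theorem restrict_add_restrict_compl (s : Set Γ) (x : R⟦Γ⟧) :
    x.restrict s + x.restrict sᶜ = x := by
  ext n
  simp only [coeff_add, coeff_restrict, indicator_self_add_compl_apply]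

theorem restrict_mem_supportedIn (s : Set Γ) (x : R⟦Γ⟧) : x.restrict s ∈ supportedIn R s :=
  support_indicator_subset

theorem supportedIn_sup (s t : Set Γ) :
    supportedIn R s ⊔ supportedIn R t = supportedIn R (s ∪ t) := by
  refine le_antisymm (sup_le (supportedIn_mono subset_union_left)
    (supportedIn_mono subset_union_right)) fun x hx => ?_
  refine Submodule.mem_sup.2 ⟨_, restrict_mem_supportedIn s x, _, ?_,
    restrict_add_restrict_compl s x⟩
  have : (x.restrict sᶜ).support ⊆ sᶜ ∩ (s ∪ t) :=
    (support_indicator (s := sᶜ)).trans_subset (inter_subset_inter_right _ hx)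
  exact this.trans fun n hn => hn.2.resolve_left hn.1

theorem supportedIn_empty : supportedIn R (∅ : Set Γ) = ⊥ := by
  ext x
  simp [mem_supportedIn, subset_empty_iff, support_eq_empty_iff]

theorem supportedIn_univ : supportedIn R (univ : Set Γ) = ⊤ :=
  eq_top_iff.2 fun _ _ => subset_univ _

theorem isCompl_supportedIn_compl (s : Set Γ) :
    IsCompl (supportedIn R s) (supportedIn R sᶜ) :=
  .of_eq (by rw [supportedIn_inf, inter_compl_self, supportedIn_empty])
    (by rw [supportedIn_sup, union_compl_self, supportedIn_univ])

theorem map_ofFinsuppLinearMap_supported {s : Set Γ} (hs : s.Finite) :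
    (Finsupp.supported R R s).map (ofFinsuppLinearMap R) = supportedIn R s := by
  ext x
  refine ⟨?_, fun hx => ?_⟩
  · rintro ⟨f, hf, rfl⟩ n hn
    by_contra h
    exact hn ((Finsupp.mem_supported' R f).1 hf n h)
  · refine ⟨Finsupp.ofSupportFinite x.coeff (hs.subset hx), ?_, ?_⟩
    · exact (Finsupp.mem_supported' R _).2 fun n hn => by_contra fun h => hn (hx h)
    · ext n
      rfl

end Supported

section Finrank

variable [PartialOrder Γ] [Ring R] [StrongRankCondition R]

theorem finrank_supportedIn (s : Finset Γ) : finrank R (supportedIn R (s : Set Γ)) = s.card := by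
  have hinj : Function.Injective (ofFinsuppLinearMap R : (Γ →₀ R) →ₗ[R] R⟦Γ⟧) :=
    fun f g h => Finsupp.ext fun n => congr($h |>.coeff n)
  rw [← map_ofFinsuppLinearMap_supported s.finite_toSet,
    ← (Submodule.equivMapOfInjective _ hinj _).finrank_eq,
    (Finsupp.supportedEquivFinsupp _).finrank_eq, finrank_finsupp_self]
  simp only [SetLike.coe_sort_coe, Fintype.card_coe]

theorem finrank_quotient_supportedIn_compl (s : Finset Γ) :
    finrank R (R⟦Γ⟧ ⧸ supportedIn R (s : Set Γ)ᶜ) = s.card := by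
  have hcompl := isCompl_supportedIn_compl (R := R) (s : Set Γ)ᶜ
  rw [compl_compl] at hcompl
  rw [(Submodule.quotientEquivOfIsCompl _ _ hcompl).finrank_eq, finrank_supportedIn]

end Finrank

theorem mem_supportedIn_Ici_iff [LinearOrder Γ] [Semiring R] {e : Γ} {x : R⟦Γ⟧} :
    x ∈ supportedIn R (Ici e) ↔ (e : WithTop Γ) ≤ x.orderTop := by
  rw [le_orderTop_iff_forall, mem_supportedIn]
  exact ⟨fun h j hj => by_contra fun hx => (WithTop.coe_lt_coe.1 hj).not_ge (h hx),
    fun h j hj => le_of_not_gt fun hje => hj (h j (WithTop.coe_lt_coe.2 hje))⟩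

instance [AddCommMonoid Γ] [PartialOrder Γ] [IsOrderedCancelAddMonoid Γ] [CommSemiring R] :
    SMulCommClass R R⟦Γ⟧ R⟦Γ⟧ where
  smul_comm r x y := by
    rw [smul_eq_mul, smul_eq_mul, ← single_zero_mul_eq_smul, ← single_zero_mul_eq_smul,
      mul_left_comm]

section LaurentSeries

variable [CommSemiring R]

theorem comap_mulLeft_supportedIn_Ici [NoZeroDivisors R] {c : LaurentSeries R} (hc : c ≠ 0)
    (e : ℤ) : (supportedIn R (Ici e)).comap (LinearMap.mulLeft R c) =
      supportedIn R (Ici (e - c.order)) := by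
  ext x
  rw [Submodule.mem_comap, LinearMap.mulLeft_apply, mem_supportedIn_Ici_iff,
    mem_supportedIn_Ici_iff, orderTop_mul, ← order_eq_orderTop_of_ne_zero hc]
  induction x.orderTop using WithTop.recTopCoe with
  | top => simp
  | coe n =>
    norm_cast
    omega

theorem range_ofPowerSeries :
    range (ofPowerSeries ℤ R) = (supportedIn R (Ici (0 : ℤ)) : Set (LaurentSeries R)) := by
  ext x
  refine ⟨?_, fun hx => ⟨PowerSeries.mk fun m => x.coeff m, ?_⟩⟩
  · rintro ⟨f, rfl⟩ n hn
    by_contra h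
    exact hn (by rw [PowerSeries.coeff_coe, if_pos (lt_of_not_ge h)])
  · ext n
    rw [PowerSeries.coeff_coe]
    split_ifs with hn
    · exact (by_contra fun h => hn.not_ge (hx h)).symm
    · rw [PowerSeries.coeff_mk, Int.natAbs_of_nonneg (le_of_not_gt hn)]

theorem aeval_monomial_single_neg_one (m : ℕ) (a : R) :
    Polynomial.aeval (single (-1 : ℤ) (1 : R)) (Polynomial.monomial m a) =
      single (-m : ℤ) a := by
  rw [Polynomial.aeval_monomial, algebraMap_apply', PowerSeries.algebraMap_eq, ofPowerSeries_C,
    C_apply, single_pow, one_pow, single_mul_single, zero_add, mul_one, smul_neg, nsmul_one]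

theorem range_aeval_single_neg_one :
    range (Polynomial.aeval (R := R) (single (-1 : ℤ) (1 : R))) =
      (supportedIn R (Iic (0 : ℤ)) : Set (LaurentSeries R)) := by
  ext x
  refine ⟨?_, fun hx => ?_⟩
  · rintro ⟨p, rfl⟩
    induction p using Polynomial.induction_on' with
    | add p q hp hq =>
      rw [SetLike.mem_coe, map_add]
      exact add_mem hp hq
    | monomial m a =>
      rw [SetLike.mem_coe, aeval_monomial_single_neg_one]
      exact support_single_subset.trans (by simp)
  set s := Finset.Icc x.order 0
  have hxs : x.support ⊆ s := fun n hn =>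
    Finset.mem_coe.2 (Finset.mem_Icc.2 ⟨order_le_of_coeff_ne_zero hn, hx hn⟩)
  have hsum : ∑ i ∈ s, single i (x.coeff i) = x := by
    ext n
    rw [coeff_sum, Finset.sum_eq_single n (fun j _ hj => coeff_single_of_ne hj.symm)
      fun hn => by rw [coeff_single_same]; exact not_not.1 fun h => hn (hxs h),
      coeff_single_same]
  refine ⟨∑ i ∈ s, Polynomial.monomial (-i).toNat (x.coeff i), ?_⟩
  rw [map_sum]
  refine (Finset.sum_congr rfl fun i hi => ?_).trans hsum
  rw [aeval_monomial_single_neg_one, Int.toNat_of_nonneg (neg_nonneg.2 (Finset.mem_Icc.1 hi).2),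
    neg_neg]

end LaurentSeries

theorem diffEulerChar_supportedIn_Iic_Ici [Ring R] [StrongRankCondition R] (a b : ℤ) :
    Submodule.diffEulerChar (supportedIn R (Iic a)) (supportedIn R (Ici b)) = a - b + 1 := by
  have hinf : supportedIn R (Iic a) ⊓ supportedIn R (Ici b) =
      supportedIn R (Finset.Icc b a : Set ℤ) := by
    rw [supportedIn_inf, Iic_inter_Ici, Finset.coe_Icc]
  have hsup : supportedIn R (Iic a) ⊔ supportedIn R (Ici b) =
      supportedIn R (Finset.Ioo a b : Set ℤ)ᶜ := by
    rw [supportedIn_sup, Finset.coe_Ioo]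
    congr 1
    ext n
    simp only [mem_union, mem_Iic, mem_Ici, mem_compl_iff, mem_Ioo]
    omega
  rw [Submodule.diffEulerChar, hinf, hsup, finrank_supportedIn,
    finrank_quotient_supportedIn_compl, Int.card_Icc, Int.card_Ioo]
  omega

end HahnSeries

open HahnSeries Submodule

theorem regulator_valuation_rank_one_general (k : Type*) [Field k]
    (t : LaurentSeries k) (ht : t = HahnSeries.single (-1 : ℤ) (1 : k))
    (c : LaurentSeries k) (hc : c ≠ 0)
    (L Λ₁ Λ₂ : Submodule k (LaurentSeries k))
    (hL : (L : Set (LaurentSeries k)) =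
      Set.range (fun f : PowerSeries k => (HahnSeries.ofPowerSeries ℤ k f : LaurentSeries k)))
    (hΛ₂ : (Λ₂ : Set (LaurentSeries k)) =
      Set.range (fun p : Polynomial k => (Polynomial.aeval t p : LaurentSeries k)))
    (hΛ₁ : (Λ₁ : Set (LaurentSeries k)) = (fun x => c * x) '' (Λ₂ : Set (LaurentSeries k))) :
    ((Module.finrank k (Λ₁ ⊓ L : Submodule k (LaurentSeries k)) : ℤ)
        - Module.finrank k (LaurentSeries k ⧸ (Λ₁ ⊔ L)))
      - ((Module.finrank k (Λ₂ ⊓ L : Submodule k (LaurentSeries k)) : ℤ)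
        - Module.finrank k (LaurentSeries k ⧸ (Λ₂ ⊔ L)))
      = c.order := by
  have hL' : L = supportedIn k (Ici 0) := SetLike.coe_injective (hL.trans range_ofPowerSeries)
  have hΛ₂' : Λ₂ = supportedIn k (Iic 0) :=
    SetLike.coe_injective (hΛ₂.trans (ht ▸ range_aeval_single_neg_one))
  let φ := LinearEquiv.ofBijective (LinearMap.mulLeft k c) (mulLeft_bijective₀ c hc)
  have hΛ₁' : Λ₁ = Λ₂.map (φ : LaurentSeries k →ₗ[k] LaurentSeries k) :=
    SetLike.coe_injective (by rw [hΛ₁, map_coe]; rfl)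
  have hφL : L.comap (φ : LaurentSeries k →ₗ[k] LaurentSeries k) =
      supportedIn k (Ici (-c.order)) := by
    rw [hL', ← zero_sub]
    exact comap_mulLeft_supportedIn_Ici hc 0
  change diffEulerChar Λ₁ L - diffEulerChar Λ₂ L = c.order
  rw [hΛ₁', diffEulerChar_map, hφL, hΛ₂', hL', diffEulerChar_supportedIn_Iic_Ici,
    diffEulerChar_supportedIn_Iic_Ici]
  ring

/-- The `n = 1` case of the regulator-valuation lemma:  in `F = k((1/t))` (modelled as
`LaurentSeries k` in `u = 1/t`, so `t = u⁻¹ = single (-1) 1` and the additive valuation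
is `HahnSeries.order`), take `L = k[[1/t]]`, `Λ₂ = k[t]` and `Λ₁ = c·k[t]` for
`c ∈ F^×`.  With `χ_i = dim_k (Λ_i ∩ L) - dim_k (F/(Λ_i + L))` the Euler characteristic
of `δ_i : Λ_i ⊕ L → F, (λ,ℓ) ↦ λ - ℓ`, one has `χ₁ - χ₂ = v(c)` (note `det ρ = c`,
so this is `v(det ρ) = χ₁ - χ₂`). -/
theorem regulator_valuation_rank_one (k : Type*) [Field k] [Fintype k]
    (t : LaurentSeries k) (ht : t = HahnSeries.single (-1 : ℤ) (1 : k))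
    (c : LaurentSeries k) (hc : c ≠ 0)
    (L Λ₁ Λ₂ : Submodule k (LaurentSeries k))
    (hL : (L : Set (LaurentSeries k)) =
      Set.range (fun f : PowerSeries k => (HahnSeries.ofPowerSeries ℤ k f : LaurentSeries k)))
    (hΛ₂ : (Λ₂ : Set (LaurentSeries k)) =
      Set.range (fun p : Polynomial k => (Polynomial.aeval t p : LaurentSeries k)))
    (hΛ₁ : (Λ₁ : Set (LaurentSeries k)) = (fun x => c * x) '' (Λ₂ : Set (LaurentSeries k))) :
    ((Module.finrank k (Λ₁ ⊓ L : Submodule k (LaurentSeries k)) : ℤ)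
        - Module.finrank k (LaurentSeries k ⧸ (Λ₁ ⊔ L)))
      - ((Module.finrank k (Λ₂ ⊓ L : Submodule k (LaurentSeries k)) : ℤ)
        - Module.finrank k (LaurentSeries k ⧸ (Λ₂ ⊔ L)))
      = c.order :=
  regulator_valuation_rank_one_general k t ht c hc L Λ₁ Λ₂ hL hΛ₂ hΛ₁
end

section
/- (Non-archimedean inverse function theorem for entire q-linear series) Let F be a complete non-archimedean normed field (or finite product of such) of characteristic p containing F_q, and f(x) = x + Σ_{i≥1} e_i x^{q^i} with ‖e_i‖ → 0 (entire). Then there exists ε > 0 such that f maps the ball B = {x : ‖x‖ ≤ ε} bijectively onto itself, and f is an isometry on B. -/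
/-!
Write `f x = x + T x`. On a small ball the tail `T x = ∑_{i ≥ 1} eᵢ x^(qⁱ)` is additive, because
`x ↦ x^(qⁱ)` is a power of Frobenius, and satisfies `‖T x‖ ≤ ‖x‖ / 2`. In an ultrametric space
this forces `‖f x‖ = ‖x‖`, which by additivity of `f` is the isometry property, and the preimage
of `y` is the fixed point of the contraction `x ↦ y - T x` of the ball.
-/

open Metric Set Filter IsUltrametricDist
open scoped NNReal

section PerturbationOfIdentity

variable {E : Type*} [NormedAddCommGroup E] [IsUltrametricDist E] {f : E → E} {r : ℝ} {k : ℝ≥0}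

theorem IsUltrametricDist.norm_eq_of_norm_sub_lt {x y : E} (h : ‖y - x‖ < ‖x‖) : ‖y‖ = ‖x‖ := by
  simpa [max_eq_left h.le] using norm_add_eq_max_of_norm_ne_norm h.ne'

theorem IsUltrametricDist.norm_eq_of_norm_sub_le_mul (hk : k < 1) {x y : E}
    (h : ‖y - x‖ ≤ k * ‖x‖) : ‖y‖ = ‖x‖ := by
  rcases eq_or_ne x 0 with rfl | hx
  · simpa [sub_eq_zero] using h
  · exact norm_eq_of_norm_sub_lt (h.trans_lt (mul_lt_of_lt_one_left (norm_pos_iff.mpr hx) hk))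

theorem IsUltrametricDist.sub_mem_closedBall_zero {x y : E} (hx : x ∈ closedBall 0 r)
    (hy : y ∈ closedBall 0 r) : x - y ∈ closedBall 0 r := by
  rw [mem_closedBall_zero_iff] at *
  simpa [sub_eq_add_neg] using (norm_add_le_max x (-y)).trans (by simpa using max_le hx hy)

theorem norm_sub_map_eq_of_norm_sub_le_mul (hk : k < 1)
    (hsub : ∀ x ∈ closedBall (0 : E) r, ∀ y ∈ closedBall (0 : E) r, f (x - y) = f x - f y)
    (hnear : ∀ x ∈ closedBall (0 : E) r, ‖f x - x‖ ≤ k * ‖x‖)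
    {x y : E} (hx : x ∈ closedBall 0 r) (hy : y ∈ closedBall 0 r) :
    ‖f x - f y‖ = ‖x - y‖ := by
  rw [← hsub x hx y hy]
  exact norm_eq_of_norm_sub_le_mul hk (hnear _ (sub_mem_closedBall_zero hx hy))

theorem surjOn_closedBall_of_norm_sub_le_mul [CompleteSpace E] (hk : k < 1)
    (hsub : ∀ x ∈ closedBall (0 : E) r, ∀ y ∈ closedBall (0 : E) r, f (x - y) = f x - f y)
    (hnear : ∀ x ∈ closedBall (0 : E) r, ‖f x - x‖ ≤ k * ‖x‖) :
    SurjOn f (closedBall 0 r) (closedBall 0 r) := by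
  intro y hy
  set g : E → E := fun x ↦ y - (f x - x)
  have hg_maps : MapsTo g (closedBall 0 r) (closedBall 0 r) := fun x hx ↦
    sub_mem_closedBall_zero hy <| by
      have hfx := hnear x hx
      rw [mem_closedBall_zero_iff] at hx ⊢
      exact hfx.trans (mul_le_of_le_one_left (norm_nonneg x) hk.le) |>.trans hx
  have hg_lip : LipschitzOnWith k g (closedBall 0 r) := by
    refine LipschitzOnWith.of_dist_le_mul fun a ha b hb ↦ ?_
    have hg_sub : g a - g b = -(f (a - b) - (a - b)) := by
      simp only [g, hsub a ha b hb]
      abel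
    rw [dist_eq_norm, dist_eq_norm, hg_sub, norm_neg]
    exact hnear _ (sub_mem_closedBall_zero ha hb)
  obtain ⟨x, hx, hfix, -⟩ := ContractingWith.exists_fixedPoint' isClosed_closedBall.isComplete
    hg_maps ⟨hk, hg_lip.mapsToRestrict hg_maps⟩ hy (edist_ne_top _ _)
  refine ⟨x, hx, ?_⟩
  have hgx : y - (f x - x) = x := hfix
  linear_combination (norm := abel) -hgx

theorem bijOn_closedBall_of_norm_sub_le_mul [CompleteSpace E] (hk : k < 1)
    (hsub : ∀ x ∈ closedBall (0 : E) r, ∀ y ∈ closedBall (0 : E) r, f (x - y) = f x - f y)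
    (hnear : ∀ x ∈ closedBall (0 : E) r, ‖f x - x‖ ≤ k * ‖x‖) :
    BijOn f (closedBall 0 r) (closedBall 0 r) := by
  refine ⟨fun x hx ↦ ?_, fun x hx y hy hxy ↦ ?_, surjOn_closedBall_of_norm_sub_le_mul hk hsub hnear⟩
  · have hfx := norm_eq_of_norm_sub_le_mul hk (hnear x hx)
    rw [mem_closedBall_zero_iff] at hx ⊢
    exact hfx.trans_le hx
  · rw [← sub_eq_zero, ← norm_eq_zero, ← norm_sub_map_eq_of_norm_sub_le_mul hk hsub hnear hx hy,
      hxy, sub_self, norm_zero]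

end PerturbationOfIdentity

section QLinearSeries

variable {F : Type*} [NormedField F]

noncomputable def qLinearSeries (e : ℕ → F) (q : ℕ) (x : F) : F := ∑' i, e i * x ^ q ^ i

theorem qLinearSeries_sub {p : ℕ} [ExpChar F p] {q m : ℕ} (hq : q = p ^ m) {e : ℕ → F} {x y : F}
    (hx : Summable fun i ↦ e i * x ^ q ^ i) (hy : Summable fun i ↦ e i * y ^ q ^ i) :
    qLinearSeries e q (x - y) = qLinearSeries e q x - qLinearSeries e q y := by
  unfold qLinearSeries
  rw [← hx.tsum_sub hy]
  congr 1 with i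
  rw [hq, ← pow_mul, sub_pow_expChar_pow, mul_sub]

theorem norm_mul_pow_le_mul_norm {ε : ℝ} (hε : ε ≤ 1) (a : F) {x : F} (hx : ‖x‖ ≤ ε) {n : ℕ}
    (hn : 2 ≤ n) : ‖a * x ^ n‖ ≤ ‖a‖ * ε * ‖x‖ := by
  have hx_pow : ‖x‖ ^ n ≤ ε * ‖x‖ := calc
    ‖x‖ ^ n ≤ ‖x‖ ^ 2 := pow_le_pow_of_le_one (norm_nonneg x) (hx.trans hε) hn
    _ = ‖x‖ * ‖x‖ := sq _
    _ ≤ ε * ‖x‖ := mul_le_mul_of_nonneg_right hx (norm_nonneg x)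
  rw [norm_mul, norm_pow, mul_assoc]
  exact mul_le_mul_of_nonneg_left hx_pow (norm_nonneg a)

variable [IsUltrametricDist F]

theorem summable_mul_pow_of_tendsto_norm_zero [CompleteSpace F] {e : ℕ → F}
    (he : Tendsto (fun i ↦ ‖e i‖) atTop (nhds 0)) {x : F} (hx : ‖x‖ ≤ 1) (n : ℕ → ℕ) :
    Summable fun i ↦ e i * x ^ n i := by
  refine NonarchimedeanAddGroup.summable_of_tendsto_cofinite_zero ?_
  rw [Nat.cofinite_eq_atTop]
  refine squeeze_zero_norm (fun i ↦ ?_) he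
  rw [norm_mul, norm_pow]
  exact mul_le_of_le_one_right (norm_nonneg _) (pow_le_one₀ (norm_nonneg x) hx)

theorem norm_qLinearSeries_sub_self_le {e : ℕ → F} (he0 : e 0 = 1) {q : ℕ} (hq : 2 ≤ q)
    {ε : ℝ} (hε : ε ≤ 1) {k : ℝ≥0} (hk : ∀ i, ‖e i‖ * ε ≤ k) {x : F} (hx : ‖x‖ ≤ ε)
    (hsum : Summable fun i ↦ e i * x ^ q ^ i) :
    ‖qLinearSeries e q x - x‖ ≤ k * ‖x‖ := by
  rw [qLinearSeries, hsum.tsum_eq_zero_add]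
  simp only [he0, pow_zero, pow_one, one_mul, add_sub_cancel_left]
  refine norm_tsum_le_of_forall_le_of_nonneg (by positivity) fun i ↦ ?_
  have hn : 2 ≤ q ^ (i + 1) := hq.trans (Nat.le_self_pow i.succ_ne_zero q)
  exact (norm_mul_pow_le_mul_norm hε _ hx hn).trans
    (mul_le_mul_of_nonneg_right (hk _) (norm_nonneg x))

end QLinearSeries

theorem exists_pos_le_one_forall_mul_le_of_bddAbove {u : ℕ → ℝ} (hu : BddAbove (range u))
    {c : ℝ} (hc : 0 < c) : ∃ ε, 0 < ε ∧ ε ≤ 1 ∧ ∀ i, u i * ε ≤ c := by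
  obtain ⟨C, hC⟩ := hu
  set C' := max C 1
  have hC' : 0 < C' := lt_max_of_lt_right one_pos
  refine ⟨min 1 (c / C'), by positivity, min_le_left _ _, fun i ↦ ?_⟩
  calc u i * min 1 (c / C') ≤ C' * (c / C') := by
        gcongr
        · exact (hC (mem_range_self i)).trans (le_max_left _ _)
        · exact min_le_right _ _
    _ = c := mul_div_cancel₀ c hC'.ne'

/-- Non-archimedean inverse function theorem for entire `q`-linear series: over a complete
non-archimedean (ultrametric) normed field of characteristic `p`, if
`f(x) = x + ∑_{i ≥ 1} e_i x^(q^i)` with `‖e_i‖ → 0` (and `q` a positive power of `p`),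
then there is `ε > 0` such that the series converges on the ball `B = {x : ‖x‖ ≤ ε}`,
`f` maps `B` bijectively onto itself, and `f` is an isometry on `B`. -/
theorem nonarchimedean_inverse_function_theorem
    (F : Type*) [NontriviallyNormedField F] [CompleteSpace F] [IsUltrametricDist F]
    (p : ℕ) [Fact p.Prime] [CharP F p]
    (q : ℕ) (m : ℕ) (hm : 0 < m) (hq : q = p ^ m)
    (e : ℕ → F) (he0 : e 0 = 1)
    (he : Filter.Tendsto (fun i => ‖e i‖) Filter.atTop (nhds 0)) :
    ∃ ε : ℝ, 0 < ε ∧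
      (∀ x : F, ‖x‖ ≤ ε → Summable (fun i => e i * x ^ (q ^ i))) ∧
      Set.BijOn (fun x => ∑' i : ℕ, e i * x ^ (q ^ i))
        {x : F | ‖x‖ ≤ ε} {x : F | ‖x‖ ≤ ε} ∧
      (∀ x y : F, ‖x‖ ≤ ε → ‖y‖ ≤ ε →
        ‖(∑' i : ℕ, e i * x ^ (q ^ i)) - (∑' i : ℕ, e i * y ^ (q ^ i))‖ = ‖x - y‖) := by
  obtain ⟨ε, hε0, hε1, hεe⟩ :=
    exists_pos_le_one_forall_mul_le_of_bddAbove he.bddAbove_range (c := 2⁻¹) (by norm_num)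
  have hq2 : 2 ≤ q := hq ▸ (Fact.out : p.Prime).two_le.trans (Nat.le_self_pow hm.ne' p)
  have hsum (x : F) (hx : ‖x‖ ≤ ε) : Summable fun i ↦ e i * x ^ q ^ i :=
    summable_mul_pow_of_tendsto_norm_zero he (hx.trans hε1) _
  have hball : closedBall (0 : F) ε = {x | ‖x‖ ≤ ε} := by ext; simp
  have hsub : ∀ x ∈ closedBall (0 : F) ε, ∀ y ∈ closedBall (0 : F) ε,
      qLinearSeries e q (x - y) = qLinearSeries e q x - qLinearSeries e q y := by
    simp only [mem_closedBall_zero_iff]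
    exact fun x hx y hy ↦ qLinearSeries_sub hq (hsum x hx) (hsum y hy)
  have hnear : ∀ x ∈ closedBall (0 : F) ε, ‖qLinearSeries e q x - x‖ ≤ (2⁻¹ : ℝ≥0) * ‖x‖ := by
    simp only [mem_closedBall_zero_iff]
    exact fun x hx ↦ norm_qLinearSeries_sub_self_le he0 hq2 hε1 (by simpa using hεe) hx (hsum x hx)
  refine ⟨ε, hε0, hsum, hball ▸ bijOn_closedBall_of_norm_sub_le_mul (by norm_num) hsub hnear,
    fun x y hx hy ↦ ?_⟩
  exact norm_sub_map_eq_of_norm_sub_le_mul (by norm_num) hsub hnear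
    (mem_closedBall_zero_iff.mpr hx) (mem_closedBall_zero_iff.mpr hy)
end
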